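/- Consider a POP and a point x* such that (x*,λ*) satisfies the KKT conditions for some λ*, and MFCQ holds at x*. Assume that the infimum defining ω(x) is attained for every x in a neighborhood of x*, and that the following local Hölder error bound holds: there exist τ > 0, γ > 0 and η > 0 such that dist((x,λ), {x*} × Λ*) ≤ τ · σ(x,λ)^γ whenever ‖x − x*‖ ≤ η and dist(λ, Λ*) ≤ η. Then there exists ε₁ > 0 such that every x with ‖x − x*‖ ≤ ε₁ satisfies ‖x − x*‖ ≤ τ · ω(x)^γ. -/

import Mathlib

open MvPolynomial Metric Filter Matrix

/-- Evaluation of a polynomial at a Euclidean point. -/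
noncomputable def peval {n : ℕ} (x : EuclideanSpace ℝ (Fin n)) (p : MvPolynomial (Fin n) ℝ) : ℝ :=
  MvPolynomial.eval (fun i => x i) p

/-- Gradient of a polynomial at a point. -/
noncomputable def pgrad {n : ℕ} (p : MvPolynomial (Fin n) ℝ) (x : EuclideanSpace ℝ (Fin n)) :
    EuclideanSpace ℝ (Fin n) :=
  WithLp.toLp 2 (fun i => peval x (MvPolynomial.pderiv i p))

/-- KKT residual σ(x,λ). -/
noncomputable def kktRes {n m : ℕ} (f : MvPolynomial (Fin n) ℝ)
    (g : Fin m → MvPolynomial (Fin n) ℝ) (Eqs : Finset (Fin m))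
    (x : EuclideanSpace ℝ (Fin n)) (lam : EuclideanSpace ℝ (Fin m)) : ℝ :=
  ‖pgrad f x - ∑ i, lam i • pgrad (g i) x‖
    + Real.sqrt (∑ j ∈ Eqs, (peval x (g j)) ^ 2)
    + Real.sqrt (∑ i ∈ Eqsᶜ, (max (-(peval x (g i))) 0) ^ 2)
    + |∑ i ∈ Eqsᶜ, lam i * peval x (g i)|
    + Real.sqrt (∑ i ∈ Eqsᶜ, (max (-(lam i)) 0) ^ 2)

/-- KKT conditions at (x, λ): stationarity of the Lagrangian, primal feasibility,
dual feasibility, and complementarity. -/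
def IsKKT {n m : ℕ} (f : MvPolynomial (Fin n) ℝ) (g : Fin m → MvPolynomial (Fin n) ℝ)
    (Eqs : Finset (Fin m)) (x : EuclideanSpace ℝ (Fin n)) (lam : EuclideanSpace ℝ (Fin m)) : Prop :=
  pgrad f x - ∑ i, lam i • pgrad (g i) x = 0 ∧
  (∀ j ∈ Eqs, peval x (g j) = 0) ∧
  (∀ i ∉ Eqs, 0 ≤ peval x (g i) ∧ 0 ≤ lam i ∧ lam i * peval x (g i) = 0)

/-- ω(x) = inf over multipliers of the KKT residual. -/
noncomputable def omga {n m : ℕ} (f : MvPolynomial (Fin n) ℝ) (g : Fin m → MvPolynomial (Fin n) ℝ)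
    (Eqs : Finset (Fin m)) (x : EuclideanSpace ℝ (Fin n)) : ℝ :=
  ⨅ lam : EuclideanSpace ℝ (Fin m), kktRes f g Eqs x lam

/-- Mangasarian–Fromovitz constraint qualification at x. -/
def MFCQat {n m : ℕ} (g : Fin m → MvPolynomial (Fin n) ℝ) (Eqs : Finset (Fin m))
    (x : EuclideanSpace ℝ (Fin n)) : Prop :=
  ∃ v : EuclideanSpace ℝ (Fin n),
    (∀ i ∉ Eqs, peval x (g i) = 0 → ∑ k, pgrad (g i) x k * v k < 0) ∧
    (∀ j ∈ Eqs, ∑ k, pgrad (g j) x k * v k = 0) ∧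
    LinearIndependent ℝ (fun j : {j // j ∈ Eqs} => pgrad (g j.1) x)

/-- Set of optimal multipliers Λ* at x*. -/
def dualSols {n m : ℕ} (f : MvPolynomial (Fin n) ℝ) (g : Fin m → MvPolynomial (Fin n) ℝ)
    (Eqs : Finset (Fin m)) (x : EuclideanSpace ℝ (Fin n)) : Set (EuclideanSpace ℝ (Fin m)) :=
  {lam | IsKKT f g Eqs x lam}

/-- A primal-dual pair as a point of the Euclidean (L²) product space ℝⁿ × ℝᵐ. -/
noncomputable def pairL2 {n m : ℕ} (x : EuclideanSpace ℝ (Fin n)) (lam : EuclideanSpace ℝ (Fin m)) :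
    WithLp 2 (EuclideanSpace ℝ (Fin n) × EuclideanSpace ℝ (Fin m)) :=
  (WithLp.equiv 2 _).symm (x, lam)

/-- The set {x*} × Λ* inside the Euclidean (L²) product space. -/
def primalDualSet {n m : ℕ} (f : MvPolynomial (Fin n) ℝ) (g : Fin m → MvPolynomial (Fin n) ℝ)
    (Eqs : Finset (Fin m)) (xs : EuclideanSpace ℝ (Fin n)) :
    Set (WithLp 2 (EuclideanSpace ℝ (Fin n) × EuclideanSpace ℝ (Fin m))) :=
  {z | (WithLp.equiv 2 _ z).1 = xs ∧ (WithLp.equiv 2 _ z).2 ∈ dualSols f g Eqs xs}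

/-!
The residual `σ(x, ·)` is convex in the multiplier, and `σ(x, λ*) → 0` as `x → x*`. If a
multiplier `λ` with `σ(x, λ) ≤ σ(x, λ*)` lay farther than `η` from `Λ*`, the segment from `λ*`
to `λ` would contain a multiplier at distance exactly `η` from `Λ*` whose residual is still at most
`σ(x, λ*)`; the error bound at that multiplier forces `η ≤ τ σ(x, λ*)^γ`, which fails for `x` near
`x*`. So the error bound applies to every such `λ`, giving `‖x - x*‖ ≤ τ σ(x, λ)^γ` for all `λ`,
and passing to the infimum over `λ` gives the bound by `ω(x)`.
-/

open Set

theorem Real.sqrt_sum_sq_mul_add_mul_le {ι : Type*} (s : Finset ι) (u v : ι → ℝ) {a b : ℝ}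
    (ha : 0 ≤ a) (hb : 0 ≤ b) :
    √(∑ i ∈ s, (a * u i + b * v i) ^ 2) ≤ a * √(∑ i ∈ s, u i ^ 2) + b * √(∑ i ∈ s, v i ^ 2) := by
  have hu := Real.sq_sqrt (s.sum_nonneg fun i _ => sq_nonneg (u i))
  have hv := Real.sq_sqrt (s.sum_nonneg fun i _ => sq_nonneg (v i))
  have hcs := Real.sum_mul_le_sqrt_mul_sqrt s u v
  have hexpand : ∑ i ∈ s, (a * u i + b * v i) ^ 2 =
      a ^ 2 * ∑ i ∈ s, u i ^ 2 + 2 * (a * b) * ∑ i ∈ s, u i * v i + b ^ 2 * ∑ i ∈ s, v i ^ 2 := by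
    simp only [Finset.mul_sum, ← Finset.sum_add_distrib]
    exact Finset.sum_congr rfl fun i _ => by ring
  rw [Real.sqrt_le_left (by positivity), hexpand]
  nlinarith [mul_nonneg ha hb]

theorem ConvexOn.sqrt_sum_sq {ι E : Type*} [AddCommGroup E] [Module ℝ E] {S : Set E}
    (t : Finset ι) {φ : ι → E → ℝ} (hφ : ∀ i ∈ t, ConvexOn ℝ S (φ i))
    (hφ0 : ∀ i ∈ t, ∀ x ∈ S, 0 ≤ φ i x) (hS : Convex ℝ S) :
    ConvexOn ℝ S fun x => √(∑ i ∈ t, φ i x ^ 2) := by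
  refine ⟨hS, fun x hx y hy a b ha hb hab => ?_⟩
  have hxy : a • x + b • y ∈ S := hS hx hy ha hb hab
  calc √(∑ i ∈ t, φ i (a • x + b • y) ^ 2)
      ≤ √(∑ i ∈ t, (a * φ i x + b * φ i y) ^ 2) := by
        gcongr with i hi
        · exact hφ0 i hi _ hxy
        · exact (hφ i hi).2 hx hy ha hb hab
    _ ≤ a * √(∑ i ∈ t, φ i x ^ 2) + b * √(∑ i ∈ t, φ i y ^ 2) :=
        Real.sqrt_sum_sq_mul_add_mul_le t _ _ ha hb

theorem convexOn_norm_sub_sum_smul {ι F : Type*} [SeminormedAddCommGroup F] [NormedSpace ℝ F]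
    (s : Finset ι) (c : F) (v : ι → F) :
    ConvexOn ℝ univ fun lam : EuclideanSpace ℝ ι => ‖c - ∑ i ∈ s, lam i • v i‖ := by
  have := (convexOn_dist c convex_univ).comp_linearMap
    (∑ i ∈ s, (EuclideanSpace.proj i : EuclideanSpace ℝ ι →L[ℝ] ℝ).smulRight (v i)).toLinearMap
  simpa [Function.comp_def, dist_eq_norm'] using this

theorem le_mul_iInf_rpow {ι : Type*} [Nonempty ι] {h : ι → ℝ} (hh : ∀ i, 0 ≤ h i)
    {a τ γ : ℝ} (hτ : 0 < τ) (hγ : 0 < γ) (ha : ∀ i, a ≤ τ * h i ^ γ) :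
    a ≤ τ * (⨅ i, h i) ^ γ := by
  have hinf : 0 ≤ ⨅ i, h i := le_ciInf hh
  rcases le_or_gt a 0 with ha0 | ha0
  · exact ha0.trans (mul_nonneg hτ.le (Real.rpow_nonneg hinf γ))
  have haτ : 0 ≤ a / τ := (div_pos ha0 hτ).le
  have hr : (a / τ) ^ γ⁻¹ ≤ ⨅ i, h i := le_ciInf fun i =>
    (Real.rpow_inv_le_iff_of_pos haτ (hh i) hγ).2 ((div_le_iff₀' hτ).2 (ha i))
  calc a = τ * ((a / τ) ^ γ⁻¹) ^ γ := by
        rw [Real.rpow_inv_rpow haτ hγ.ne', mul_div_cancel₀ a hτ.ne']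
    _ ≤ τ * (⨅ i, h i) ^ γ := by gcongr

@[fun_prop]
theorem continuous_peval {n : ℕ} (p : MvPolynomial (Fin n) ℝ) :
    Continuous fun x : EuclideanSpace ℝ (Fin n) => peval x p :=
  (MvPolynomial.continuous_eval p).comp (PiLp.continuous_ofLp 2 _)

@[fun_prop]
theorem continuous_pgrad {n : ℕ} (p : MvPolynomial (Fin n) ℝ) :
    Continuous fun x : EuclideanSpace ℝ (Fin n) => pgrad p x :=
  (PiLp.continuous_toLp 2 _).comp (continuous_pi fun i => continuous_peval (pderiv i p))

section KKTResidual

variable {n m : ℕ} (f : MvPolynomial (Fin n) ℝ) (g : Fin m → MvPolynomial (Fin n) ℝ)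
  (Eqs : Finset (Fin m))

theorem kktRes_nonneg (x : EuclideanSpace ℝ (Fin n)) (lam : EuclideanSpace ℝ (Fin m)) :
    0 ≤ kktRes f g Eqs x lam := by
  unfold kktRes
  positivity

theorem kktRes_eq_zero_of_isKKT {x : EuclideanSpace ℝ (Fin n)} {lam : EuclideanSpace ℝ (Fin m)}
    (h : IsKKT f g Eqs x lam) : kktRes f g Eqs x lam = 0 := by
  obtain ⟨hstat, heq, hineq⟩ := h
  have hineq' : ∀ i ∈ Eqsᶜ, 0 ≤ peval x (g i) ∧ 0 ≤ lam i ∧ lam i * peval x (g i) = 0 :=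
    fun i hi => hineq i (Finset.mem_compl.mp hi)
  unfold kktRes
  rw [hstat, Finset.sum_eq_zero fun j hj => by rw [heq j hj, zero_pow two_ne_zero],
    Finset.sum_eq_zero fun i hi => by rw [max_eq_right (by linarith [(hineq' i hi).1])]; norm_num,
    Finset.sum_eq_zero fun i hi => (hineq' i hi).2.2,
    Finset.sum_eq_zero fun i hi => by rw [max_eq_right (by linarith [(hineq' i hi).2.1])]; norm_num]
  simp

theorem continuous_kktRes_left (lam : EuclideanSpace ℝ (Fin m)) :
    Continuous fun x => kktRes f g Eqs x lam := by
  unfold kktRes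
  fun_prop

theorem convexOn_kktRes (x : EuclideanSpace ℝ (Fin n)) : ConvexOn ℝ univ (kktRes f g Eqs x) := by
  have hstat := convexOn_norm_sub_sum_smul Finset.univ (pgrad f x) fun i => pgrad (g i) x
  have hcompl : ConvexOn ℝ univ fun lam : EuclideanSpace ℝ (Fin m) =>
      |∑ i ∈ Eqsᶜ, lam i * peval x (g i)| := by
    simpa using convexOn_norm_sub_sum_smul Eqsᶜ (0 : ℝ) fun i => peval x (g i)
  have hdual : ConvexOn ℝ univ fun lam : EuclideanSpace ℝ (Fin m) =>
      √(∑ i ∈ Eqsᶜ, max (-(lam i)) 0 ^ 2) := by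
    refine ConvexOn.sqrt_sum_sq _ (fun i _ => ?_) (fun i _ lam _ => le_max_right _ _) convex_univ
    exact (-(EuclideanSpace.proj i : EuclideanSpace ℝ (Fin m) →L[ℝ] ℝ).toLinearMap).convexOn
      convex_univ |>.sup (convexOn_const 0 convex_univ)
  exact (((hstat.add (convexOn_const _ convex_univ)).add (convexOn_const _ convex_univ)).add
    hcompl).add hdual

end KKTResidual

def HolderErrorBound {n m : ℕ} (f : MvPolynomial (Fin n) ℝ) (g : Fin m → MvPolynomial (Fin n) ℝ)
    (Eqs : Finset (Fin m)) (xs : EuclideanSpace ℝ (Fin n)) (τ γ η : ℝ) : Prop :=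
  ∀ (x : EuclideanSpace ℝ (Fin n)) (lam : EuclideanSpace ℝ (Fin m)),
    ‖x - xs‖ ≤ η → infDist lam (dualSols f g Eqs xs) ≤ η →
      infDist (pairL2 x lam) (primalDualSet f g Eqs xs) ≤ τ * kktRes f g Eqs x lam ^ γ

section ErrorBound

variable {n m : ℕ} {f : MvPolynomial (Fin n) ℝ} {g : Fin m → MvPolynomial (Fin n) ℝ}
  {Eqs : Finset (Fin m)} {xs : EuclideanSpace ℝ (Fin n)} {lams : EuclideanSpace ℝ (Fin m)}

theorem primalDualSet_nonempty (hkkt : IsKKT f g Eqs xs lams) :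
    (primalDualSet f g Eqs xs).Nonempty :=
  ⟨pairL2 xs lams, rfl, hkkt⟩

theorem norm_sub_le_infDist_pairL2 (hkkt : IsKKT f g Eqs xs lams)
    (x : EuclideanSpace ℝ (Fin n)) (lam : EuclideanSpace ℝ (Fin m)) :
    ‖x - xs‖ ≤ infDist (pairL2 x lam) (primalDualSet f g Eqs xs) := by
  refine (le_infDist (primalDualSet_nonempty hkkt)).2 fun z ⟨hz, _⟩ => ?_
  rw [← dist_eq_norm, ← show z.fst = xs from hz]
  exact WithLp.dist_fst_le (pairL2 x lam) z

theorem infDist_dualSols_le_infDist_pairL2 (hkkt : IsKKT f g Eqs xs lams)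
    (x : EuclideanSpace ℝ (Fin n)) (lam : EuclideanSpace ℝ (Fin m)) :
    infDist lam (dualSols f g Eqs xs) ≤ infDist (pairL2 x lam) (primalDualSet f g Eqs xs) := by
  refine (le_infDist (primalDualSet_nonempty hkkt)).2 fun z ⟨_, hz⟩ => ?_
  exact (infDist_le_dist_of_mem hz).trans (WithLp.dist_snd_le (pairL2 x lam) z)

variable {τ γ η : ℝ}

theorem infDist_dualSols_le_of_kktRes_le (hkkt : IsKKT f g Eqs xs lams) (hτ : 0 ≤ τ)
    (hγ : 0 ≤ γ) (hEB : HolderErrorBound f g Eqs xs τ γ η) {x : EuclideanSpace ℝ (Fin n)}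
    (hx : ‖x - xs‖ ≤ η) (hsmall : τ * kktRes f g Eqs x lams ^ γ < η)
    {lam : EuclideanSpace ℝ (Fin m)} (hlam : kktRes f g Eqs x lam ≤ kktRes f g Eqs x lams) :
    infDist lam (dualSols f g Eqs xs) ≤ η := by
  by_contra! hfar
  have hη : 0 ≤ η :=
    (mul_nonneg hτ (Real.rpow_nonneg (kktRes_nonneg f g Eqs x lams) γ)).trans hsmall.le
  obtain ⟨lam', hseg, hdist⟩ :
      ∃ lam' ∈ segment ℝ lams lam, infDist lam' (dualSols f g Eqs xs) = η :=
    (convex_segment lams lam).isPreconnected.intermediate_value (left_mem_segment ℝ lams lam)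
      (right_mem_segment ℝ lams lam) (continuous_infDist_pt _).continuousOn
      ⟨by rwa [infDist_zero_of_mem (show lams ∈ dualSols f g Eqs xs from hkkt)], hfar.le⟩
  have hres : kktRes f g Eqs x lam' ≤ kktRes f g Eqs x lams :=
    ((convexOn_kktRes f g Eqs x).le_on_segment trivial trivial hseg).trans (max_le le_rfl hlam)
  refine lt_irrefl η ?_
  calc
    η = infDist lam' (dualSols f g Eqs xs) := hdist.symm
    _ ≤ infDist (pairL2 x lam') (primalDualSet f g Eqs xs) :=
        infDist_dualSols_le_infDist_pairL2 hkkt x lam'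
    _ ≤ τ * kktRes f g Eqs x lam' ^ γ := hEB x lam' hx hdist.le
    _ ≤ τ * kktRes f g Eqs x lams ^ γ := by gcongr; exact kktRes_nonneg f g Eqs x lam'
    _ < η := hsmall

theorem norm_sub_le_mul_kktRes_rpow (hkkt : IsKKT f g Eqs xs lams) (hτ : 0 ≤ τ)
    (hγ : 0 ≤ γ) (hEB : HolderErrorBound f g Eqs xs τ γ η) {x : EuclideanSpace ℝ (Fin n)}
    (hx : ‖x - xs‖ ≤ η) (hsmall : τ * kktRes f g Eqs x lams ^ γ < η)
    (lam : EuclideanSpace ℝ (Fin m)) :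
    ‖x - xs‖ ≤ τ * kktRes f g Eqs x lam ^ γ := by
  have hle : ∀ lam, kktRes f g Eqs x lam ≤ kktRes f g Eqs x lams →
      ‖x - xs‖ ≤ τ * kktRes f g Eqs x lam ^ γ := fun lam hlam =>
    (norm_sub_le_infDist_pairL2 hkkt x lam).trans <| hEB x lam hx <|
      infDist_dualSols_le_of_kktRes_le hkkt hτ hγ hEB hx hsmall hlam
  rcases le_total (kktRes f g Eqs x lam) (kktRes f g Eqs x lams) with hlam | hlam
  · exact hle lam hlam
  · exact (hle lams le_rfl).trans (by gcongr; exact kktRes_nonneg f g Eqs x lams)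

end ErrorBound

theorem primal_error_bound_omega_general {n m : ℕ} (f : MvPolynomial (Fin n) ℝ)
    (g : Fin m → MvPolynomial (Fin n) ℝ) (Eqs : Finset (Fin m))
    (xs : EuclideanSpace ℝ (Fin n)) (lams : EuclideanSpace ℝ (Fin m))
    (hkkt : IsKKT f g Eqs xs lams)
    (τ γ η : ℝ) (hτ : 0 < τ) (hγ : 0 < γ) (hη : 0 < η)
    (hEB : ∀ (x : EuclideanSpace ℝ (Fin n)) (lam : EuclideanSpace ℝ (Fin m)),
      ‖x - xs‖ ≤ η → Metric.infDist lam (dualSols f g Eqs xs) ≤ η →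
      Metric.infDist (pairL2 x lam) (primalDualSet f g Eqs xs) ≤
        τ * (kktRes f g Eqs x lam) ^ γ) :
    ∃ ε₁ > (0:ℝ), ∀ x : EuclideanSpace ℝ (Fin n), ‖x - xs‖ ≤ ε₁ →
      ‖x - xs‖ ≤ τ * (omga f g Eqs x) ^ γ := by
  have hcont : ContinuousAt (fun x => τ * kktRes f g Eqs x lams ^ γ) xs :=
    ((continuous_kktRes_left f g Eqs lams).continuousAt.rpow_const (Or.inr hγ.le)).const_mul τ
  have hzero : τ * kktRes f g Eqs xs lams ^ γ = 0 := by
    rw [kktRes_eq_zero_of_isKKT f g Eqs hkkt, Real.zero_rpow hγ.ne', mul_zero]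
  obtain ⟨ε, hε, hsmall⟩ := Metric.eventually_nhds_iff.1 (hcont.eventually_lt_const (hzero ▸ hη))
  refine ⟨min (ε / 2) η, by positivity, fun x hx => ?_⟩
  have hxε : dist x xs < ε := by
    rw [dist_eq_norm]; linarith [min_le_left (ε / 2) η]
  exact le_mul_iInf_rpow (kktRes_nonneg f g Eqs x) hτ hγ
    (norm_sub_le_mul_kktRes_rpow hkkt hτ.le hγ.le hEB (hx.trans (min_le_right _ _)) (hsmall hxε))

/-- Primal error bound in terms of ω. -/
theorem primal_error_bound_omega {n m : ℕ} (f : MvPolynomial (Fin n) ℝ)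
    (g : Fin m → MvPolynomial (Fin n) ℝ) (Eqs : Finset (Fin m))
    (xs : EuclideanSpace ℝ (Fin n)) (lams : EuclideanSpace ℝ (Fin m))
    (hkkt : IsKKT f g Eqs xs lams) (hmfcq : MFCQat g Eqs xs)
    (hattain : ∃ δ > (0:ℝ), ∀ x : EuclideanSpace ℝ (Fin n), ‖x - xs‖ ≤ δ →
      ∃ lam : EuclideanSpace ℝ (Fin m), kktRes f g Eqs x lam = omga f g Eqs x)
    (τ γ η : ℝ) (hτ : 0 < τ) (hγ : 0 < γ) (hη : 0 < η)
    (hEB : ∀ (x : EuclideanSpace ℝ (Fin n)) (lam : EuclideanSpace ℝ (Fin m)),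
      ‖x - xs‖ ≤ η → Metric.infDist lam (dualSols f g Eqs xs) ≤ η →
      Metric.infDist (pairL2 x lam) (primalDualSet f g Eqs xs) ≤
        τ * (kktRes f g Eqs x lam) ^ γ) :
    ∃ ε₁ > (0:ℝ), ∀ x : EuclideanSpace ℝ (Fin n), ‖x - xs‖ ≤ ε₁ →
      ‖x - xs‖ ≤ τ * (omga f g Eqs x) ^ γ :=
  primal_error_bound_omega_general f g Eqs xs lams hkkt τ γ η hτ hγ hη hEB
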